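/- arXiv:1910.09618 — 3 statements merged into one kernel-verified Lean document; each statement's English description precedes it below -/
import Mathlib

section
/- Let (M, C) be a metric space and k ≥ 1. Define the lifted distance A between unordered k-tuples X = (x_1,...,x_k) and Y = (y_1,...,y_k) of elements of M by A(X,Y) = min over doubly stochastic k×k matrices S of Σ_{ij} S_{ij} C(x_i, y_j). Then A is a metric on the set of k-tuples of elements of M modulo reordering. In particular: A(X,Y) = 0 iff Y is a permutation of X, A is symmetric, and A satisfies the triangle inequality. -/
open Finset

/-- A `k × k` real matrix is doubly stochastic if it is entrywise nonnegative and
all rows and columns sum to `1`. -/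
def DoublyStochastic' {k : ℕ} (S : Matrix (Fin k) (Fin k) ℝ) : Prop :=
  (∀ i j, 0 ≤ S i j) ∧ (∀ i, ∑ j, S i j = 1) ∧ (∀ j, ∑ i, S i j = 1)

/-- The lifted distance between `k`-tuples of points of a metric space:
minimize `∑ S i j * dist (X i) (Y j)` over doubly stochastic matrices `S`. -/
noncomputable def liftedDist {M : Type*} [MetricSpace M] {k : ℕ}
    (X Y : Fin k → M) : ℝ :=
  sInf {c : ℝ | ∃ S : Matrix (Fin k) (Fin k) ℝ, DoublyStochastic' S ∧
    c = ∑ i, ∑ j, S i j * dist (X i) (Y j)}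

/-!
By Birkhoff's theorem the doubly stochastic matrices are the convex hull of the permutation
matrices, so the linear objective defining `liftedDist` attains its minimum at a permutation:
`liftedDist X Y` is the cheapest matching cost `∑ i, dist (X i) (Y (σ i))`. The metric axioms
then follow pointwise from those of `dist`, inverting an optimal matching for symmetry and
composing two optimal matchings for the triangle inequality.
-/

namespace Matrix

variable {n : Type*} [Fintype n] [DecidableEq n]

def transportCost (c : Matrix n n ℝ) : Matrix n n ℝ →ₗ[ℝ] ℝ where
  toFun S := ∑ i, ∑ j, S i j * c i j
  map_add' S T := by simp only [add_apply, add_mul, sum_add_distrib]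
  map_smul' a S := by
    simp only [smul_apply, smul_eq_mul, mul_assoc, mul_sum, RingHom.id_apply]

theorem transportCost_permMatrix (c : Matrix n n ℝ) (σ : Equiv.Perm n) :
    c.transportCost (σ.permMatrix ℝ) = ∑ i, c i (σ i) := by
  refine sum_congr rfl fun i _ => ?_
  simp [Equiv.Perm.permMatrix, PEquiv.toMatrix_apply, ite_mul, eq_comm]

theorem exists_perm_transportCost_le {c S : Matrix n n ℝ} (hS : S ∈ doublyStochastic ℝ n) :
    ∃ σ : Equiv.Perm n, ∑ i, c i (σ i) ≤ c.transportCost S := by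
  rw [← SetLike.mem_coe, doublyStochastic_eq_convexHull_permMatrix] at hS
  obtain ⟨_, ⟨σ, rfl⟩, hσ⟩ :=
    (c.transportCost.concaveOn convex_univ).exists_le_of_mem_convexHull (Set.subset_univ _) hS
  exact ⟨σ, c.transportCost_permMatrix σ ▸ hσ⟩

end Matrix

theorem doublyStochastic'_iff_mem_doublyStochastic {k : ℕ} {S : Matrix (Fin k) (Fin k) ℝ} :
    DoublyStochastic' S ↔ S ∈ doublyStochastic ℝ (Fin k) := by
  rw [mem_doublyStochastic_iff_sum, DoublyStochastic']

section LiftedDist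

variable {M : Type*} [MetricSpace M] {k : ℕ} (X Y Z : Fin k → M)

theorem isLeast_liftedDist :
    IsLeast (Set.range fun σ : Equiv.Perm (Fin k) => ∑ i, dist (X i) (Y (σ i)))
      (liftedDist X Y) := by
  set c : Matrix (Fin k) (Fin k) ℝ := Matrix.of fun i j => dist (X i) (Y j)
  set matchingCost : Equiv.Perm (Fin k) → ℝ := fun σ => ∑ i, c i (σ i)
  obtain ⟨σ₀, hσ₀⟩ := Finite.exists_min matchingCost
  have hplans : IsLeast {v | ∃ S : Matrix (Fin k) (Fin k) ℝ, DoublyStochastic' S ∧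
      v = ∑ i, ∑ j, S i j * dist (X i) (Y j)} (matchingCost σ₀) := by
    refine ⟨⟨σ₀.permMatrix ℝ, doublyStochastic'_iff_mem_doublyStochastic.2
      permMatrix_mem_doublyStochastic, (c.transportCost_permMatrix σ₀).symm⟩, ?_⟩
    rintro _ ⟨S, hS, rfl⟩
    obtain ⟨σ, hσ⟩ := Matrix.exists_perm_transportCost_le (c := c)
      (doublyStochastic'_iff_mem_doublyStochastic.1 hS)
    exact (hσ₀ σ).trans hσ
  rw [liftedDist, hplans.csInf_eq]
  exact ⟨⟨σ₀, rfl⟩, by rintro _ ⟨σ, rfl⟩; exact hσ₀ σ⟩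

theorem liftedDist_le_sum_dist (σ : Equiv.Perm (Fin k)) :
    liftedDist X Y ≤ ∑ i, dist (X i) (Y (σ i)) :=
  (isLeast_liftedDist X Y).2 ⟨σ, rfl⟩

theorem exists_liftedDist_eq_sum_dist :
    ∃ σ : Equiv.Perm (Fin k), liftedDist X Y = ∑ i, dist (X i) (Y (σ i)) := by
  obtain ⟨σ, hσ⟩ := (isLeast_liftedDist X Y).1
  exact ⟨σ, hσ.symm⟩

theorem liftedDist_nonneg : 0 ≤ liftedDist X Y := by
  obtain ⟨σ, hσ⟩ := exists_liftedDist_eq_sum_dist X Y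
  exact hσ ▸ sum_nonneg fun i _ => dist_nonneg

theorem liftedDist_eq_zero_iff :
    liftedDist X Y = 0 ↔ ∃ σ : Equiv.Perm (Fin k), ∀ i, X i = Y (σ i) := by
  constructor
  · intro h
    obtain ⟨σ, hσ⟩ := exists_liftedDist_eq_sum_dist X Y
    rw [h, eq_comm, sum_eq_zero_iff_of_nonneg fun i _ => dist_nonneg] at hσ
    exact ⟨σ, fun i => dist_eq_zero.1 (hσ i (mem_univ i))⟩
  · rintro ⟨σ, hσ⟩
    refine le_antisymm ?_ (liftedDist_nonneg X Y)
    simpa [hσ] using liftedDist_le_sum_dist X Y σ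

theorem liftedDist_comm_le : liftedDist Y X ≤ liftedDist X Y := by
  obtain ⟨σ, hσ⟩ := exists_liftedDist_eq_sum_dist X Y
  calc liftedDist Y X ≤ ∑ i, dist (Y i) (X (σ⁻¹ i)) := liftedDist_le_sum_dist Y X σ⁻¹
    _ = ∑ i, dist (Y (σ i)) (X i) := by
        simpa using (Equiv.sum_comp σ fun i => dist (Y i) (X (σ⁻¹ i))).symm
    _ = liftedDist X Y := by simp only [hσ, dist_comm]

theorem liftedDist_comm : liftedDist X Y = liftedDist Y X :=
  le_antisymm (liftedDist_comm_le Y X) (liftedDist_comm_le X Y)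

theorem liftedDist_triangle : liftedDist X Z ≤ liftedDist X Y + liftedDist Y Z := by
  obtain ⟨σ, hσ⟩ := exists_liftedDist_eq_sum_dist X Y
  obtain ⟨τ, hτ⟩ := exists_liftedDist_eq_sum_dist Y Z
  calc liftedDist X Z ≤ ∑ i, dist (X i) (Z (τ (σ i))) := liftedDist_le_sum_dist X Z (σ.trans τ)
    _ ≤ ∑ i, (dist (X i) (Y (σ i)) + dist (Y (σ i)) (Z (τ (σ i)))) :=
        sum_le_sum fun i _ => dist_triangle _ _ _
    _ = liftedDist X Y + liftedDist Y Z := by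
        rw [sum_add_distrib, Equiv.sum_comp σ fun i => dist (Y i) (Z (τ i)), hσ, hτ]

end LiftedDist

theorem liftedDist_is_metric_general {M : Type*} [MetricSpace M] {k : ℕ}
    (X Y Z : Fin k → M) :
    0 ≤ liftedDist X Y ∧
    (liftedDist X Y = 0 ↔ ∃ σ : Equiv.Perm (Fin k), ∀ i, X i = Y (σ i)) ∧
    liftedDist X Y = liftedDist Y X ∧
    liftedDist X Z ≤ liftedDist X Y + liftedDist Y Z :=
  ⟨liftedDist_nonneg X Y, liftedDist_eq_zero_iff X Y, liftedDist_comm X Y,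
    liftedDist_triangle X Y Z⟩

/-- The lifted distance is a metric on `k`-tuples modulo reordering: it is
nonnegative, vanishes exactly when the tuples agree up to a permutation, is
symmetric, and satisfies the triangle inequality. -/
theorem liftedDist_is_metric {M : Type*} [MetricSpace M] {k : ℕ} (hk : 1 ≤ k)
    (X Y Z : Fin k → M) :
    0 ≤ liftedDist X Y ∧
    (liftedDist X Y = 0 ↔ ∃ σ : Equiv.Perm (Fin k), ∀ i, X i = Y (σ i)) ∧
    liftedDist X Y = liftedDist Y X ∧
    liftedDist X Z ≤ liftedDist X Y + liftedDist Y Z :=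
  liftedDist_is_metric_general X Y Z
end

section
/- For λ ≥ 0 and p ≥ 1, the unbalanced transport cost C_{λ,p}(x,y) = min { ‖J‖_1 + λ‖z‖_p : J ∈ ℝ^{|E|}, z ∈ ℝ^{|V|}, P^T J = y − x + z } is a metric on the set of mass distributions M(V) on the vertices of a connected graph G = (V,E). That is, C_{λ,p}(x,y) ≥ 0 with equality iff x = y (assuming λ > 0), C_{λ,p} is symmetric, and C_{λ,p}(x,y) ≤ C_{λ,p}(x,w) + C_{λ,p}(w,y). -/
/-!
Feasible pairs `(J, z)` for `(x, w)` and for `(w, y)` add up to a feasible pair for `(x, y)`, and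
negating a feasible pair for `(x, y)` gives one for `(y, x)`; since `‖·‖₁` and `‖·‖_p` are even
and subadditive, this yields symmetry and the triangle inequality. For definiteness, the
constraint bounds `|y v - x v|` by `2‖J‖₁ + ‖z‖_p` at every vertex `v`, so
`C(x, y) ≥ min (1/2) λ * |y v - x v|`.
-/

open Finset

variable {V E : Type*} [Fintype V] [Fintype E] [DecidableEq V]

/-- The divergence `Pᵀ J` of an edge flow on a graph given by the incidence
structure `src, tgt : E → V`. -/
def div' (src tgt : E → V) (J : E → ℝ) (v : V) : ℝ :=
  (∑ e, if tgt e = v then J e else 0) - ∑ e, if src e = v then J e else 0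

/-- The vector `p`-norm on `V → ℝ`. -/
noncomputable def pnorm (p : ℝ) (z : V → ℝ) : ℝ := (∑ v, |z v| ^ p) ^ (1 / p)

/-- The unbalanced transport cost `C_{λ,p}(x,y)`:
minimize `‖J‖₁ + λ‖z‖_p` subject to `Pᵀ J = y - x + z`. -/
noncomputable def Cunb (src tgt : E → V) (lam p : ℝ) (x y : V → ℝ) : ℝ :=
  sInf {c : ℝ | ∃ (J : E → ℝ) (z : V → ℝ),
    (∀ v, div' src tgt J v = y v - x v + z v) ∧
    c = (∑ e, |J e|) + lam * pnorm p z}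

/-- The graph determined by the incidence structure is connected. -/
def IncConnected (src tgt : E → V) : Prop :=
  ∀ v w : V, Relation.ReflTransGen
    (fun a b => ∃ e, (src e = a ∧ tgt e = b) ∨ (src e = b ∧ tgt e = a)) v w


section Divergence

omit [Fintype V]

variable (src tgt : E → V)

lemma div'_eq_sum_filter (J : E → ℝ) (v : V) :
    div' src tgt J v = (∑ e with tgt e = v, J e) - ∑ e with src e = v, J e := by
  simp only [div', sum_filter]

lemma div'_zero (v : V) : div' src tgt 0 v = 0 := by
  simp [div'_eq_sum_filter]

lemma div'_add (J₁ J₂ : E → ℝ) (v : V) :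
    div' src tgt (J₁ + J₂) v = div' src tgt J₁ v + div' src tgt J₂ v := by
  simp only [div'_eq_sum_filter, Pi.add_apply, sum_add_distrib]
  ring

lemma div'_neg (J : E → ℝ) (v : V) : div' src tgt (-J) v = -div' src tgt J v := by
  simp only [div'_eq_sum_filter, Pi.neg_apply, sum_neg_distrib]
  ring

lemma abs_div'_le (J : E → ℝ) (v : V) : |div' src tgt J v| ≤ 2 * ∑ e, |J e| := by
  have abs_sum_filter_le (f : E → V) : |∑ e with f e = v, J e| ≤ ∑ e, |J e| :=
    (abs_sum_le_sum_abs _ _).trans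
      (sum_le_sum_of_subset_of_nonneg (filter_subset _ _)
        fun e _ _ => abs_nonneg (J e))
  rw [div'_eq_sum_filter]
  linarith [abs_sub _ _ |>.trans (add_le_add (abs_sum_filter_le tgt) (abs_sum_filter_le src))]

def IsFeasible (x y : V → ℝ) (J : E → ℝ) (z : V → ℝ) : Prop :=
  ∀ v, div' src tgt J v = y v - x v + z v

variable {src tgt}

lemma isFeasible_zero_sub (x y : V → ℝ) : IsFeasible src tgt x y 0 (x - y) := fun v => by
  simp [div'_zero]

lemma IsFeasible.add {x y w : V → ℝ} {J₁ J₂ : E → ℝ} {z₁ z₂ : V → ℝ}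
    (h₁ : IsFeasible src tgt x w J₁ z₁) (h₂ : IsFeasible src tgt w y J₂ z₂) :
    IsFeasible src tgt x y (J₁ + J₂) (z₁ + z₂) := fun v => by
  rw [div'_add, h₁ v, h₂ v, Pi.add_apply]
  ring

lemma IsFeasible.neg {x y : V → ℝ} {J : E → ℝ} {z : V → ℝ}
    (h : IsFeasible src tgt x y J z) : IsFeasible src tgt y x (-J) (-z) := fun v => by
  rw [div'_neg, h v, Pi.neg_apply]
  ring

lemma abs_sub_le_of_isFeasible {x y : V → ℝ} {J : E → ℝ} {z : V → ℝ}
    (h : IsFeasible src tgt x y J z) (v : V) :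
    |y v - x v| ≤ 2 * (∑ e, |J e|) + |z v| :=
  calc |y v - x v| = |div' src tgt J v - z v| := by rw [h v]; ring_nf
    _ ≤ |div' src tgt J v| + |z v| := abs_sub _ _
    _ ≤ 2 * (∑ e, |J e|) + |z v| := add_le_add_left (abs_div'_le _ _ J v) _

end Divergence

section PNorm

omit [DecidableEq V]

lemma pnorm_nonneg (p : ℝ) (z : V → ℝ) : 0 ≤ pnorm p z := by
  unfold pnorm
  positivity

lemma pnorm_neg (p : ℝ) (z : V → ℝ) : pnorm p (-z) = pnorm p z := by
  simp [pnorm]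

lemma pnorm_zero {p : ℝ} (hp : p ≠ 0) : pnorm p (0 : V → ℝ) = 0 := by
  simp [pnorm, Real.zero_rpow hp, Real.zero_rpow (inv_ne_zero hp)]

lemma abs_le_pnorm {p : ℝ} (hp : 0 < p) (z : V → ℝ) (v : V) : |z v| ≤ pnorm p z := by
  unfold pnorm
  calc |z v| = (|z v| ^ p) ^ (1 / p) := by
        rw [← Real.rpow_mul (abs_nonneg _), mul_one_div_cancel hp.ne', Real.rpow_one]
    _ ≤ (∑ u, |z u| ^ p) ^ (1 / p) :=
        Real.rpow_le_rpow (by positivity)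
          (single_le_sum (f := fun u => |z u| ^ p) (fun u _ => by positivity)
            (mem_univ v)) (by positivity)

lemma pnorm_add_le {p : ℝ} (hp : 1 ≤ p) (z₁ z₂ : V → ℝ) :
    pnorm p (z₁ + z₂) ≤ pnorm p z₁ + pnorm p z₂ :=
  Real.Lp_add_le univ z₁ z₂ hp

end PNorm

section FlowCost

omit [DecidableEq V]

noncomputable def flowCost (lam p : ℝ) (J : E → ℝ) (z : V → ℝ) : ℝ :=
  (∑ e, |J e|) + lam * pnorm p z

variable {lam p : ℝ}

lemma flowCost_nonneg (hlam : 0 ≤ lam) (J : E → ℝ) (z : V → ℝ) : 0 ≤ flowCost lam p J z := by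
  have := pnorm_nonneg p z
  unfold flowCost
  positivity

lemma flowCost_neg (J : E → ℝ) (z : V → ℝ) : flowCost lam p (-J) (-z) = flowCost lam p J z := by
  simp [flowCost, pnorm_neg]

lemma flowCost_add_le (hlam : 0 ≤ lam) (hp : 1 ≤ p) (J₁ J₂ : E → ℝ) (z₁ z₂ : V → ℝ) :
    flowCost lam p (J₁ + J₂) (z₁ + z₂) ≤ flowCost lam p J₁ z₁ + flowCost lam p J₂ z₂ := by
  have hJ : ∑ e, |(J₁ + J₂) e| ≤ (∑ e, |J₁ e|) + ∑ e, |J₂ e| := by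
    rw [← sum_add_distrib]
    exact sum_le_sum fun e _ => abs_add_le _ _
  have hz := mul_le_mul_of_nonneg_left (pnorm_add_le hp z₁ z₂) hlam
  unfold flowCost
  linarith

end FlowCost

section Cost

variable (src tgt : E → V) (lam p : ℝ)

def feasibleCosts (x y : V → ℝ) : Set ℝ :=
  {c | ∃ J z, IsFeasible src tgt x y J z ∧ c = flowCost lam p J z}

variable {src tgt lam p}

lemma Cunb_eq_sInf (x y : V → ℝ) :
    Cunb src tgt lam p x y = sInf (feasibleCosts src tgt lam p x y) :=
  rfl

lemma feasibleCosts_nonempty (x y : V → ℝ) : (feasibleCosts src tgt lam p x y).Nonempty :=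
  ⟨_, 0, x - y, isFeasible_zero_sub x y, rfl⟩

lemma bddBelow_feasibleCosts (hlam : 0 ≤ lam) (x y : V → ℝ) :
    BddBelow (feasibleCosts src tgt lam p x y) :=
  ⟨0, by rintro _ ⟨J, z, -, rfl⟩; exact flowCost_nonneg hlam J z⟩

lemma Cunb_le_flowCost (hlam : 0 ≤ lam) {x y : V → ℝ} {J : E → ℝ} {z : V → ℝ}
    (h : IsFeasible src tgt x y J z) : Cunb src tgt lam p x y ≤ flowCost lam p J z :=
  csInf_le (bddBelow_feasibleCosts hlam x y) ⟨J, z, h, rfl⟩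

lemma le_Cunb {x y : V → ℝ} {m : ℝ}
    (h : ∀ J z, IsFeasible src tgt x y J z → m ≤ flowCost lam p J z) :
    m ≤ Cunb src tgt lam p x y :=
  le_csInf (feasibleCosts_nonempty x y) (by rintro _ ⟨J, z, hJz, rfl⟩; exact h J z hJz)

lemma Cunb_nonneg (hlam : 0 ≤ lam) (x y : V → ℝ) : 0 ≤ Cunb src tgt lam p x y :=
  le_Cunb fun J z _ => flowCost_nonneg hlam J z

lemma Cunb_self (hlam : 0 ≤ lam) (hp : p ≠ 0) (x : V → ℝ) : Cunb src tgt lam p x x = 0 := by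
  refine le_antisymm ?_ (Cunb_nonneg hlam x x)
  simpa [flowCost, pnorm_zero hp] using Cunb_le_flowCost (p := p) hlam (isFeasible_zero_sub x x)

lemma Cunb_comm (x y : V → ℝ) : Cunb src tgt lam p x y = Cunb src tgt lam p y x := by
  have feasibleCosts_subset (a b : V → ℝ) :
      feasibleCosts src tgt lam p a b ⊆ feasibleCosts src tgt lam p b a := by
    rintro _ ⟨J, z, h, rfl⟩
    exact ⟨-J, -z, h.neg, (flowCost_neg J z).symm⟩
  rw [Cunb_eq_sInf, Cunb_eq_sInf,
    (feasibleCosts_subset x y).antisymm (feasibleCosts_subset y x)]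

lemma Cunb_triangle (hlam : 0 ≤ lam) (hp : 1 ≤ p) (x y w : V → ℝ) :
    Cunb src tgt lam p x y ≤ Cunb src tgt lam p x w + Cunb src tgt lam p w y := by
  rw [Cunb_eq_sInf x w, Cunb_eq_sInf w y,
    ← csInf_add (feasibleCosts_nonempty x w) (bddBelow_feasibleCosts hlam x w)
      (feasibleCosts_nonempty w y) (bddBelow_feasibleCosts hlam w y)]
  refine le_csInf ((feasibleCosts_nonempty x w).add (feasibleCosts_nonempty w y)) ?_
  rintro _ ⟨_, ⟨J₁, z₁, h₁, rfl⟩, _, ⟨J₂, z₂, h₂, rfl⟩, rfl⟩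
  exact (Cunb_le_flowCost hlam (h₁.add h₂)).trans (flowCost_add_le hlam hp J₁ J₂ z₁ z₂)

lemma min_mul_abs_sub_le_Cunb (hlam : 0 ≤ lam) (hp : 0 < p) (x y : V → ℝ) (v : V) :
    min (1 / 2) lam * |y v - x v| ≤ Cunb src tgt lam p x y := by
  refine le_Cunb fun J z h => ?_
  set m := min (1 / 2 : ℝ) lam
  have hmass := (abs_sub_le_of_isFeasible h v).trans (add_le_add_right (abs_le_pnorm hp z v) _)
  calc m * |y v - x v| ≤ m * (2 * (∑ e, |J e|) + pnorm p z) := by gcongr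
    _ = 2 * m * ∑ e, |J e| + m * pnorm p z := by ring
    _ ≤ 1 * ∑ e, |J e| + lam * pnorm p z := by
        have := pnorm_nonneg p z
        gcongr
        · linarith [min_le_left (1 / 2 : ℝ) lam]
        · exact min_le_right _ _
    _ = flowCost lam p J z := by rw [one_mul, flowCost]

lemma eq_of_Cunb_eq_zero (hlam : 0 < lam) (hp : 0 < p) {x y : V → ℝ}
    (h : Cunb src tgt lam p x y = 0) : x = y := by
  funext v
  have hv := min_mul_abs_sub_le_Cunb (src := src) (tgt := tgt) hlam.le hp x y v
  rw [h] at hv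
  have hmin : 0 < min (1 / 2 : ℝ) lam := lt_min (by norm_num) hlam
  exact (sub_eq_zero.mp (abs_nonpos_iff.mp (nonpos_of_mul_nonpos_right hv hmin))).symm

end Cost

theorem Cunb_is_metric_general (src tgt : E → V)
    (lam p : ℝ) (hlam : 0 < lam) (hp : 1 ≤ p) (x y w : V → ℝ) :
    0 ≤ Cunb src tgt lam p x y ∧
    (Cunb src tgt lam p x y = 0 ↔ x = y) ∧
    Cunb src tgt lam p x y = Cunb src tgt lam p y x ∧
    Cunb src tgt lam p x y ≤
      Cunb src tgt lam p x w + Cunb src tgt lam p w y := by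
  have hp₀ : 0 < p := zero_lt_one.trans_le hp
  refine ⟨Cunb_nonneg hlam.le x y, ⟨eq_of_Cunb_eq_zero hlam hp₀, ?_⟩, Cunb_comm x y,
    Cunb_triangle hlam.le hp x y w⟩
  rintro rfl
  exact Cunb_self hlam.le hp₀.ne' x

/-- `C_{λ,p}` is a metric on the set of mass distributions (nonnegative vectors)
on the vertices of a connected graph, for `λ > 0` and `p ≥ 1`. -/
theorem Cunb_is_metric (src tgt : E → V) (hconn : IncConnected src tgt)
    (lam p : ℝ) (hlam : 0 < lam) (hp : 1 ≤ p) (x y w : V → ℝ)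
    (hx : ∀ v, 0 ≤ x v) (hy : ∀ v, 0 ≤ y v) (hw : ∀ v, 0 ≤ w v) :
    0 ≤ Cunb src tgt lam p x y ∧
    (Cunb src tgt lam p x y = 0 ↔ x = y) ∧
    Cunb src tgt lam p x y = Cunb src tgt lam p y x ∧
    Cunb src tgt lam p x y ≤
      Cunb src tgt lam p x w + Cunb src tgt lam p w y :=
  Cunb_is_metric_general src tgt lam p hlam hp x y w
end

section
/- For a connected unweighted graph G with incidence matrix P and probability distributions x, y on V, the Beckmann formulation min { Σ_{e∈E} |J_e| : P^T J = y − x } equals the Kantorovich formulation min_{π ∈ Π(x,y)} Σ_{v,w} d(v,w) π(v,w), where d is the shortest-path distance (minimum cost flow equals optimal transport on graphs). -/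
open Finset

variable {V : Type*} [Fintype V] [DecidableEq V]

/-- Beckmann formulation: minimal `ℓ¹` cost of a flow (an antisymmetric
function supported on edges, each edge counted twice in the cost) whose
divergence is `y - x`. -/
noncomputable def W1B (G : SimpleGraph V) (x y : V → ℝ) : ℝ :=
  sInf {c : ℝ | ∃ J : V → V → ℝ,
    (∀ v w, J v w = - J w v) ∧
    (∀ v w, ¬ G.Adj v w → J v w = 0) ∧
    (∀ v, ∑ w, J w v = y v - x v) ∧
    c = (1 / 2) * ∑ v, ∑ w, |J v w|}

/-- Kantorovich formulation: minimal transport cost over couplings, with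
respect to the shortest-path distance. -/
noncomputable def W1K (G : SimpleGraph V) (x y : V → ℝ) : ℝ :=
  sInf {c : ℝ | ∃ π : V → V → ℝ,
    (∀ v w, 0 ≤ π v w) ∧
    (∀ v, ∑ w, π v w = x v) ∧
    (∀ w, ∑ v, π v w = y w) ∧
    c = ∑ v, ∑ w, (G.dist v w : ℝ) * π v w}

/-!
Both costs are compared through nonnegative arc flows `F`: the antisymmetric flow of `W1B` is
`F - Fᵀ`, and conversely the positive part of an antisymmetric flow `J` is an arc flow of cost
`½ ∑ |J|`. Routing each `π a b` along a geodesic turns a coupling into an arc flow of the same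
cost. Conversely an arc flow from `x` to `y` is peeled path by path: the vertices reachable from
a strict source `s` along arcs of positive flow contain a strict sink `t`, and removing the
bottleneck amount `ε` along a path from `s` to `t` lowers the flow cost by
`ε · length ≥ ε · d(s, t)` while the coupling gains `ε` at `(s, t)`. Each peel empties an arc
or balances a vertex, and once `x = y` the diagonal coupling costs nothing.
-/

namespace SimpleGraph

variable {α : Type*} [DecidableEq α] {G : SimpleGraph α} {s t : α}

namespace Walk

def dartCount (p : G.Walk s t) (v w : α) : ℕ :=
  (p.darts.map Dart.toProd).count (v, w)

theorem dartCount_eq_zero_of_not_adj (p : G.Walk s t) {v w : α} (h : ¬ G.Adj v w) :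
    p.dartCount v w = 0 :=
  List.count_eq_zero_of_not_mem fun hmem => by
    obtain ⟨⟨_, hadj⟩, -, rfl⟩ := List.mem_map.1 hmem
    exact h hadj

theorem of_dartCount_ne_zero {P : α → α → Prop} (p : G.Walk s t)
    (hP : ∀ d ∈ p.darts, P d.fst d.snd) {v w : α} (h : p.dartCount v w ≠ 0) : P v w := by
  obtain ⟨d, hd, hdvw⟩ := List.mem_map.1 (List.count_pos_iff.1 (Nat.pos_of_ne_zero h))
  obtain ⟨rfl, rfl⟩ := Prod.ext_iff.1 hdvw
  exact hP d hd

theorem IsPath.dartCount_le_one {p : G.Walk s t} (hp : p.IsPath) (v w : α) :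
    p.dartCount v w ≤ 1 :=
  List.nodup_iff_count_le_one.1
    ((darts_nodup_of_support_nodup hp.support_nodup).map Dart.toProd_injective) _

theorem IsPath.dartCount_eq_one {p : G.Walk s t} (hp : p.IsPath) {d : G.Dart}
    (hd : d ∈ p.darts) : p.dartCount d.fst d.snd = 1 :=
  le_antisymm (hp.dartCount_le_one _ _) (List.count_pos_iff.2 (List.mem_map_of_mem hd))

theorem sum_sum_dartCount [Fintype α] (p : G.Walk s t) :
    ∑ v, ∑ w, p.dartCount v w = p.length := by
  rw [← Fintype.sum_prod_type', ← length_darts, ← List.length_map (f := Dart.toProd)]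
  convert Multiset.sum_count_eq_card (s := univ)
    (m := (p.darts.map Dart.toProd : Multiset (α × α))) (fun _ _ => mem_univ _) using 2 with q
  · rw [dartCount, Multiset.coe_count]
    congr 1
    -- `List.count` on pairs uses the product `BEq`, `Multiset.count` the one from `DecidableEq`.
    exact lawful_beq_subsingleton _ _
  · rfl

theorem sum_dartCount_sub [Fintype α] (p : G.Walk s t) (v : α) :
    ∑ w, ((p.dartCount w v : ℝ) - p.dartCount v w) =
      (if v = t then 1 else 0) - (if v = s then 1 else 0) := by
  induction p with
  | nil => simp [dartCount]
  | cons h q ih =>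
    simp only [dartCount, darts_cons, List.map_cons, List.count_cons, beq_iff_eq, Prod.mk.injEq,
      Nat.cast_add, Nat.cast_ite, Nat.cast_one, Nat.cast_zero, sum_add_distrib,
      sum_sub_distrib] at ih ⊢
    simp only [ite_and, sum_ite_eq, mem_univ, sum_ite_irrel, sum_const_zero]
    grind

end Walk

theorem exists_isPath_of_reflTransGen {r : α → α → Prop} (hr : ∀ a b, r a b → G.Adj a b)
    (h : Relation.ReflTransGen r s t) :
    ∃ p : G.Walk s t, p.IsPath ∧ ∀ d ∈ p.darts, r d.fst d.snd := by
  suffices ∃ p : G.Walk s t, ∀ d ∈ p.darts, r d.fst d.snd by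
    obtain ⟨p, hp⟩ := this
    exact ⟨p.bypass, p.bypass_isPath, fun d hd => hp d (p.darts_bypass_subset_darts hd)⟩
  induction h using Relation.ReflTransGen.head_induction_on with
  | refl => exact ⟨.nil, by simp⟩
  | head hab _ ih =>
    obtain ⟨p, hp⟩ := ih
    exact ⟨.cons (hr _ _ hab) p, by simpa [hab] using hp⟩

end SimpleGraph

section

variable {α : Type*}

theorem sum_sum_sub_swap_eq_zero (F : α → α → ℝ) (R : Finset α) :
    ∑ v ∈ R, ∑ w ∈ R, (F w v - F v w) = 0 := by
  simp only [sum_sub_distrib]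
  rw [sum_comm, sub_self]

/-- The peeling induction decreases this count: each step empties an arc or balances a vertex. -/
noncomputable def supportCard (F : α → α → ℝ) (x y : α → ℝ) : ℕ :=
  (Function.support (Function.uncurry F)).ncard + {v | x v ≠ y v}.ncard

theorem sub_single_nonneg [DecidableEq α] {x : α → ℝ} (hx : 0 ≤ x) {s : α} {ε : ℝ}
    (hε : ε ≤ x s) : 0 ≤ x - Pi.single s ε := by
  intro v
  rw [Pi.sub_apply, Pi.single_apply]
  split_ifs with h
  · subst h
    simpa using hε
  · simpa using hx v

theorem exists_bottleneck {β : Type*} {a b : ℝ} (ha : 0 < a) (hb : 0 < b) {L : List β}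
    {f : β → ℝ} (hf : ∀ d ∈ L, 0 < f d) :
    ∃ ε, 0 < ε ∧ ε ≤ a ∧ ε ≤ b ∧ (∀ d ∈ L, ε ≤ f d) ∧
      (ε = a ∨ ε = b ∨ ∃ d ∈ L, ε = f d) := by
  classical
  set S := insert a (insert b (L.map f).toFinset)
  have hS : ∀ r ∈ S, 0 < r := by
    simp only [S, mem_insert, List.mem_toFinset, List.mem_map]
    rintro r (rfl | rfl | ⟨d, hd, rfl⟩) <;> [exact ha; exact hb; exact hf d hd]
  have hne : S.Nonempty := ⟨a, mem_insert_self _ _⟩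
  refine ⟨S.min' hne, hS _ (min'_mem _ _), min'_le _ _ (by simp [S]),
    min'_le _ _ (by simp [S]), fun d hd => min'_le _ _ (by simp [S, List.mem_map_of_mem hd]), ?_⟩
  have hmem := min'_mem S hne
  simp only [S, mem_insert, List.mem_toFinset, List.mem_map] at hmem
  rcases hmem with h | h | ⟨d, hd, h⟩
  exacts [.inl h, .inr (.inl h), .inr (.inr ⟨d, hd, h.symm⟩)]

variable [Fintype α]

theorem half_sum_sum_abs_sub_swap_le {F : α → α → ℝ} (hF : ∀ v w, 0 ≤ F v w) :
    1 / 2 * ∑ v, ∑ w, |F v w - F w v| ≤ ∑ v, ∑ w, F v w := by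
  calc 1 / 2 * ∑ v, ∑ w, |F v w - F w v|
      ≤ 1 / 2 * ∑ v, ∑ w, (F v w + F w v) := by
        gcongr with v _ w _
        exact (abs_sub _ _).trans_eq (by rw [abs_of_nonneg (hF v w), abs_of_nonneg (hF w v)])
    _ = ∑ v, ∑ w, F v w := by
        rw [sum_congr rfl fun _ _ => sum_add_distrib, sum_add_distrib,
          sum_comm (f := fun v w => F w v)]
        ring

structure IsCoupling (x y : α → ℝ) (π : α → α → ℝ) : Prop where
  nonneg : ∀ v w, 0 ≤ π v w
  sum_fst : ∀ v, ∑ w, π v w = x v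
  sum_snd : ∀ w, ∑ v, π v w = y w

theorem isCoupling_diag [DecidableEq α] {x : α → ℝ} (hx : 0 ≤ x) :
    IsCoupling x x fun v => Pi.single v (x v) where
  nonneg v w := by
    rw [Pi.single_apply]
    split_ifs
    exacts [hx v, le_rfl]
  sum_fst v := by simp [sum_pi_single']
  sum_snd w := by simp [sum_pi_single]

theorem IsCoupling.add_single [DecidableEq α] {x y : α → ℝ} {π : α → α → ℝ}
    (hπ : IsCoupling x y π) {ε : ℝ} (hε : 0 ≤ ε) (s t : α) :
    IsCoupling (x + Pi.single s ε) (y + Pi.single t ε)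
      fun v w => π v w + if v = s ∧ w = t then ε else 0 where
  nonneg v w := add_nonneg (hπ.nonneg v w) (by split_ifs <;> simp [hε])
  sum_fst v := by simp [sum_add_distrib, hπ.sum_fst, Pi.single_apply, ite_and]
  sum_snd w := by simp [sum_add_distrib, hπ.sum_snd, Pi.single_apply, ite_and]

theorem sum_sum_mul_add_ite [DecidableEq α] (c π : α → α → ℝ) (ε : ℝ) (s t : α) :
    ∑ v, ∑ w, c v w * (π v w + if v = s ∧ w = t then ε else 0) =
      ∑ v, ∑ w, c v w * π v w + c s t * ε := by
  simp [mul_add, sum_add_distrib, ite_and]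

theorem supportCard_lt_supportCard {F F' : α → α → ℝ} {x y x' y' : α → ℝ}
    (hF : ∀ v w, F v w = 0 → F' v w = 0) (hxy : ∀ v, x v = y v → x' v = y' v)
    (h : (∃ v w, F v w ≠ 0 ∧ F' v w = 0) ∨ ∃ v, x v ≠ y v ∧ x' v = y' v) :
    supportCard F' x' y' < supportCard F x y := by
  have hsupp :
      Function.support (Function.uncurry F') ⊆ Function.support (Function.uncurry F) :=
    fun q hq h => hq (hF q.1 q.2 h)
  have hne : {v | x' v ≠ y' v} ⊆ {v | x v ≠ y v} := fun v hv h => hv (hxy v h)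
  rcases h with ⟨v, w, h, h'⟩ | ⟨v, h, h'⟩
  · refine Nat.add_lt_add_of_lt_of_le (Set.ncard_lt_ncard ?_) (Set.ncard_le_ncard hne)
    exact (Set.ssubset_iff_of_subset hsupp).2 ⟨(v, w), h, fun h'' => h'' h'⟩
  · refine Nat.add_lt_add_of_le_of_lt (Set.ncard_le_ncard hsupp) (Set.ncard_lt_ncard ?_)
    exact (Set.ssubset_iff_of_subset hne).2 ⟨v, h, fun h'' => h'' h'⟩

namespace SimpleGraph

variable {G : SimpleGraph α} {x y : α → ℝ} {F : α → α → ℝ}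

structure IsFlow (G : SimpleGraph α) (x y : α → ℝ) (J : α → α → ℝ) : Prop where
  antisymm : ∀ v w, J v w = - J w v
  eq_zero_of_not_adj : ∀ v w, ¬ G.Adj v w → J v w = 0
  sum_apply : ∀ v, ∑ w, J w v = y v - x v

/-- A flow recorded as nonnegative amounts on arcs: its cost `∑ F` is linear in `F`, unlike the
`½ ∑ |J|` of an antisymmetric flow `J = F - Fᵀ`, which makes subtracting path flows exact. -/
structure IsNonnegFlow (G : SimpleGraph α) (x y : α → ℝ) (F : α → α → ℝ) : Prop where
  nonneg : ∀ v w, 0 ≤ F v w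
  eq_zero_of_not_adj : ∀ v w, ¬ G.Adj v w → F v w = 0
  sum_sub_apply : ∀ v, ∑ w, (F w v - F v w) = y v - x v

theorem IsFlow.isNonnegFlow_posPart {J : α → α → ℝ} (hJ : G.IsFlow x y J) :
    G.IsNonnegFlow x y fun v w => (J v w)⁺ where
  nonneg _ _ := posPart_nonneg _
  eq_zero_of_not_adj v w h := by simp [hJ.eq_zero_of_not_adj v w h]
  sum_sub_apply v := by
    rw [← hJ.sum_apply]
    refine sum_congr rfl fun w _ => ?_
    rw [hJ.antisymm v w, posPart_neg, posPart_sub_negPart]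

theorem IsFlow.sum_sum_posPart {J : α → α → ℝ} (hJ : G.IsFlow x y J) :
    ∑ v, ∑ w, (J v w)⁺ = 1 / 2 * ∑ v, ∑ w, |J v w| := by
  have hneg : ∑ v, ∑ w, (J v w)⁻ = ∑ v, ∑ w, (J v w)⁺ := by
    rw [sum_comm]
    refine sum_congr rfl fun v _ => sum_congr rfl fun w _ => ?_
    rw [hJ.antisymm w v, negPart_neg]
  simp only [← posPart_add_negPart, sum_add_distrib, hneg]
  ring

theorem IsNonnegFlow.isFlow_sub_swap (hF : G.IsNonnegFlow x y F) :
    G.IsFlow x y fun v w => F v w - F w v where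
  antisymm _ _ := by ring
  eq_zero_of_not_adj v w h := by
    rw [hF.eq_zero_of_not_adj v w h, hF.eq_zero_of_not_adj w v (by rwa [G.adj_comm]), sub_self]
  sum_apply := hF.sum_sub_apply

theorem IsNonnegFlow.exists_lt_of_ne (hF : G.IsNonnegFlow x y F) (hxy : x ≠ y) :
    ∃ s, y s < x s := by
  by_contra! h
  have hsum : ∑ v, x v = ∑ v, y v := by
    have := sum_sum_sub_swap_eq_zero F univ
    simp only [hF.sum_sub_apply, sum_sub_distrib] at this
    linarith
  exact hxy <| funext fun v => (sum_eq_sum_iff_of_le fun v _ => h v).1 hsum v (mem_univ v)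

variable [DecidableEq α]

/-- Route each `π a b` along a geodesic from `a` to `b`. -/
theorem Connected.exists_isNonnegFlow (hG : G.Connected) {π : α → α → ℝ}
    (hπ : IsCoupling x y π) :
    ∃ F, G.IsNonnegFlow x y F ∧
      ∑ v, ∑ w, F v w = ∑ v, ∑ w, (G.dist v w : ℝ) * π v w := by
  choose p hp using hG.exists_walk_length_eq_dist
  refine ⟨fun v w => ∑ a, ∑ b, π a b * (p a b).dartCount v w, ⟨?_, ?_, ?_⟩, ?_⟩
  · exact fun v w => sum_nonneg fun a _ => sum_nonneg fun b _ =>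
      mul_nonneg (hπ.nonneg a b) (Nat.cast_nonneg _)
  · intro v w h
    simp [Walk.dartCount_eq_zero_of_not_adj _ h]
  · intro v
    calc ∑ w, (∑ a, ∑ b, π a b * (p a b).dartCount w v -
          ∑ a, ∑ b, π a b * (p a b).dartCount v w)
        = ∑ a, ∑ b, π a b *
            ∑ w, (((p a b).dartCount w v : ℝ) - (p a b).dartCount v w) := by
          simp only [← sum_sub_distrib, ← mul_sub, mul_sum]
          rw [sum_comm]
          exact sum_congr rfl fun _ _ => sum_comm
      _ = y v - x v := by
          simp only [Walk.sum_dartCount_sub]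
          simp [mul_sub, sum_sub_distrib, hπ.sum_fst, hπ.sum_snd]
  · calc ∑ v, ∑ w, ∑ a, ∑ b, π a b * (p a b).dartCount v w
        = ∑ a, ∑ b, π a b * ∑ v, ∑ w, ((p a b).dartCount v w : ℝ) := by
          simp only [mul_sum]
          exact (sum_congr rfl fun _ _ => sum_comm).trans <| sum_comm.trans <|
            sum_congr rfl fun _ _ => (sum_congr rfl fun _ _ => sum_comm).trans sum_comm
      _ = ∑ v, ∑ w, (G.dist v w : ℝ) * π v w := by
          simp only [← Nat.cast_sum, Walk.sum_sum_dartCount, hp, mul_comm]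

theorem IsNonnegFlow.sum_sub_nonneg_of_forall_eq_zero (hF : G.IsNonnegFlow x y F)
    {R : Finset α} (hR : ∀ v ∈ R, ∀ w ∉ R, F v w = 0) : 0 ≤ ∑ v ∈ R, (y v - x v) :=
  calc 0 ≤ ∑ v ∈ R, ∑ w ∈ Rᶜ, (F w v - F v w) :=
        sum_nonneg fun v hv => sum_nonneg fun w hw => by
          rw [hR v hv w (mem_compl.1 hw), sub_zero]
          exact hF.nonneg w v
    _ = ∑ v ∈ R, ∑ w ∈ R, (F w v - F v w) +
          ∑ v ∈ R, ∑ w ∈ Rᶜ, (F w v - F v w) := by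
        rw [sum_sum_sub_swap_eq_zero, zero_add]
    _ = ∑ v ∈ R, (y v - x v) := by
        rw [← sum_add_distrib]
        exact sum_congr rfl fun v _ => by rw [sum_add_sum_compl, hF.sum_sub_apply]

/-- The vertices reachable from `s` along arcs of positive flow have no outflow, so their net
inflow is nonnegative; as `s` is a strict source among them, one of them is a strict sink. -/
theorem IsNonnegFlow.exists_isPath_of_lt (hF : G.IsNonnegFlow x y F) {s : α}
    (hs : y s < x s) :
    ∃ t, x t < y t ∧ ∃ p : G.Walk s t, p.IsPath ∧ ∀ d ∈ p.darts, 0 < F d.fst d.snd := by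
  classical
  set R := univ.filter fun v => Relation.ReflTransGen (fun a b => 0 < F a b) s v
  have hR : ∀ v ∈ R, ∀ w ∉ R, F v w = 0 := by
    intro v hv w hw
    simp only [R, mem_filter, mem_univ, true_and] at hv hw
    by_contra h
    exact hw (hv.tail ((hF.nonneg v w).lt_of_ne' h))
  obtain ⟨t, htR, ht⟩ : ∃ t ∈ R, x t < y t := by
    by_contra! h
    have hlt : ∑ v ∈ R, (y v - x v) < ∑ v ∈ R, 0 :=
      sum_lt_sum (fun v hv => by linarith [h v hv])
        ⟨s, by simp [R, Relation.ReflTransGen.refl], by linarith⟩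
    linarith [hF.sum_sub_nonneg_of_forall_eq_zero hR, sum_const_zero (s := R) (M := ℝ)]
  refine ⟨t, ht, exists_isPath_of_reflTransGen (fun a b hab => ?_) (by simpa [R] using htR)⟩
  by_contra h
  exact hab.ne' (hF.eq_zero_of_not_adj a b h)

theorem IsNonnegFlow.sub_mul_dartCount (hF : G.IsNonnegFlow x y F) {s t : α} {p : G.Walk s t}
    (hp : p.IsPath) {ε : ℝ} (hε : ∀ d ∈ p.darts, ε ≤ F d.fst d.snd) :
    G.IsNonnegFlow (x - Pi.single s ε) (y - Pi.single t ε)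
      fun v w => F v w - ε * p.dartCount v w where
  nonneg v w := by
    obtain h | h := Nat.le_one_iff_eq_zero_or_eq_one.1 (hp.dartCount_le_one v w)
    · simpa [h] using hF.nonneg v w
    · simpa [h] using p.of_dartCount_ne_zero (P := fun v w => ε ≤ F v w) hε (by simp [h])
  eq_zero_of_not_adj v w h := by
    simp [hF.eq_zero_of_not_adj v w h, p.dartCount_eq_zero_of_not_adj h]
  sum_sub_apply v := by
    have := p.sum_dartCount_sub v
    simp only [sum_sub_distrib, Pi.sub_apply, Pi.single_apply, ← mul_sum] at this ⊢
    have hdiv := hF.sum_sub_apply v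
    rw [sum_sub_distrib] at hdiv
    split_ifs at this ⊢ <;> linear_combination hdiv - ε * this

theorem sum_sum_sub_mul_dartCount (F : α → α → ℝ) {s t : α} (p : G.Walk s t) (ε : ℝ) :
    ∑ v, ∑ w, (F v w - ε * p.dartCount v w) = ∑ v, ∑ w, F v w - ε * p.length := by
  simp only [sum_sub_distrib, ← mul_sum, ← Nat.cast_sum, Walk.sum_sum_dartCount]

theorem IsNonnegFlow.exists_peel (hF : G.IsNonnegFlow x y F) (hx : 0 ≤ x) (hy : 0 ≤ y)
    (hxy : x ≠ y) :
    ∃ s t ε F', G.IsNonnegFlow (x - Pi.single s ε) (y - Pi.single t ε) F' ∧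
      0 ≤ x - Pi.single s ε ∧ 0 ≤ y - Pi.single t ε ∧ 0 ≤ ε ∧
      ∑ v, ∑ w, F' v w + (G.dist s t : ℝ) * ε ≤ ∑ v, ∑ w, F v w ∧
      supportCard F' (x - Pi.single s ε) (y - Pi.single t ε) < supportCard F x y := by
  obtain ⟨s, hs⟩ := hF.exists_lt_of_ne hxy
  obtain ⟨t, ht, p, hp, hpos⟩ := hF.exists_isPath_of_lt hs
  have hst : s ≠ t := by rintro rfl; linarith
  -- Peel as much as possible along `p`: the bottleneck of the path and of its two ends.
  obtain ⟨ε, hε, hεs, hεt, hεp, hεeq⟩ :=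
    exists_bottleneck (sub_pos.2 hs) (sub_pos.2 ht) (f := fun d : G.Dart => F d.fst d.snd) hpos
  have hεx : ε ≤ x s := by linarith [show 0 ≤ y s from hy s]
  have hεy : ε ≤ y t := by linarith [show 0 ≤ x t from hx t]
  refine ⟨s, t, ε, _, hF.sub_mul_dartCount hp hεp, sub_single_nonneg hx hεx,
    sub_single_nonneg hy hεy, hε.le, ?_, supportCard_lt_supportCard ?_ ?_ ?_⟩
  · have hdist : (G.dist s t : ℝ) ≤ p.length := mod_cast dist_le p
    rw [sum_sum_sub_mul_dartCount]
    nlinarith [mul_le_mul_of_nonneg_left hdist hε.le]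
  · intro v w h
    have hN : p.dartCount v w = 0 := by
      by_contra hN
      exact (p.of_dartCount_ne_zero (P := fun v w => 0 < F v w) hpos hN).ne' h
    simp [h, hN]
  · intro v h
    have hvs : v ≠ s := by rintro rfl; linarith
    have hvt : v ≠ t := by rintro rfl; linarith
    simp [hvs, hvt, h]
  · rcases hεeq with rfl | rfl | ⟨d, hd, rfl⟩
    · exact .inr ⟨s, hs.ne', by simp [hst]⟩
    · exact .inr ⟨t, ht.ne, by simp [hst.symm]⟩
    · exact .inl ⟨d.fst, d.snd, (hpos d hd).ne', by simp [hp.dartCount_eq_one hd]⟩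

theorem IsNonnegFlow.exists_isCoupling (hF : G.IsNonnegFlow x y F) (hx : 0 ≤ x)
    (hy : 0 ≤ y) :
    ∃ π, IsCoupling x y π ∧
      ∑ v, ∑ w, (G.dist v w : ℝ) * π v w ≤ ∑ v, ∑ w, F v w := by
  induction hn : supportCard F x y using Nat.strong_induction_on generalizing F x y with
  | _ n ih =>
  obtain rfl | hxy := eq_or_ne x y
  · refine ⟨_, isCoupling_diag hx, ?_⟩
    have hcost :
        ∑ v, ∑ w, (G.dist v w : ℝ) * Pi.single (M := fun _ => ℝ) v (x v) w = 0 := by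
      simp [Pi.single_apply]
    exact hcost.trans_le (sum_nonneg fun v _ => sum_nonneg fun w _ => hF.nonneg v w)
  obtain ⟨s, t, ε, F', hF', hx', hy', hε, hcost, hlt⟩ := hF.exists_peel hx hy hxy
  obtain ⟨π, hπ, hπcost⟩ := ih _ (hn ▸ hlt) hF' hx' hy' rfl
  refine ⟨_, by simpa using hπ.add_single hε s t, ?_⟩
  rw [sum_sum_mul_add_ite]
  linarith

end SimpleGraph

end

/-- On a connected unweighted graph, the Beckmann (minimum-cost flow)
formulation equals the Kantorovich (optimal transport) formulation of the
Wasserstein-1 distance between probability distributions. -/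
theorem beckmann_eq_kantorovich (G : SimpleGraph V) (hconn : G.Connected)
    (x y : V → ℝ) (hx : (∀ v, 0 ≤ x v) ∧ ∑ v, x v = 1)
    (hy : (∀ v, 0 ≤ y v) ∧ ∑ v, y v = 1) :
    W1B G x y = W1K G x y := by
  refine csInf_eq_csInf_of_forall_exists_le ?_ ?_
  · rintro _ ⟨J, hanti, hsupp, hdiv, rfl⟩
    have hJ : G.IsFlow x y J := ⟨hanti, hsupp, hdiv⟩
    obtain ⟨π, hπ, hcost⟩ := hJ.isNonnegFlow_posPart.exists_isCoupling hx.1 hy.1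
    exact ⟨_, ⟨π, hπ.nonneg, hπ.sum_fst, hπ.sum_snd, rfl⟩,
      hcost.trans_eq hJ.sum_sum_posPart⟩
  · rintro _ ⟨π, hπ0, hπx, hπy, rfl⟩
    obtain ⟨F, hF, hcost⟩ := hconn.exists_isNonnegFlow ⟨hπ0, hπx, hπy⟩
    have hJ := hF.isFlow_sub_swap
    exact ⟨_, ⟨_, hJ.antisymm, hJ.eq_zero_of_not_adj, hJ.sum_apply, rfl⟩,
      (half_sum_sum_abs_sub_swap_le hF.nonneg).trans_eq hcost⟩
end
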